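/- Let G be a resource allocation game with network (𝓒,𝓝) and mechanism f, let a^ne be a pure Nash equilibrium of G with W(a^ne) = 1, and let a^opt be any action profile of G. Let θ : 𝓘 → ℝ be constructed from (a^ne, a^opt) as in the context. Then θ is feasible for the primal LP, i.e. θ(t) ≥ 0 for all t, Σ_{t∈𝓘} [a_j f_j(A_{t,j}) − b_j f_j(A_{t,j}+1)] θ(t) ≥ 0 for every j ∈ {1,…,k}, and Σ_{t∈𝓘} w(A_t) θ(t) = 1; moreover its LP objective value satisfies Σ_{t∈𝓘} w(B_t) θ(t) = W(a^opt). -/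

import Mathlib

open Finset

noncomputable section

/-- A resource allocation game with `n` agents: resources `Fin m`, nonnegative
resource values `v`, and nonempty finite action sets consisting of subsets of resources. -/
structure RAGame (n : ℕ) where
  m : ℕ
  v : Fin m → ℝ
  v_nonneg : ∀ r, 0 ≤ v r
  act : Fin n → Finset (Finset (Fin m))
  act_nonempty : ∀ i, (act i).Nonempty

namespace RAGame

variable {n : ℕ}

/-- the number of agents in `S` selecting resource `r` at profile `a` -/
def cnt (G : RAGame n) (a : Fin n → Finset (Fin G.m)) (S : Finset (Fin n)) (r : Fin G.m) : ℕ :=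
  (S.filter fun i => r ∈ a i).card

/-- `a` is an action profile of the game -/
def IsProfile (G : RAGame n) (a : Fin n → Finset (Fin G.m)) : Prop := ∀ i, a i ∈ G.act i

/-- the welfare `W(a) = ∑ r, v r * w (|a|_r)` -/
def welf (G : RAGame n) (w : ℕ → ℝ) (a : Fin n → Finset (Fin G.m)) : ℝ :=
  ∑ r, G.v r * w (G.cnt a Finset.univ r)

end RAGame

/-- a basis function: `w 0 = 0` and `w j > 0` for `1 ≤ j ≤ n` -/
def IsBasis (n : ℕ) (w : ℕ → ℝ) : Prop :=
  w 0 = 0 ∧ ∀ j, 1 ≤ j → j ≤ n → 0 < w j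

/-- An information network on `n` agents partitioned into `k` (nonempty) classes, namely
the fibers of `cls` (`cls` surjective says every class is nonempty), where each agent of
class `j` observes exactly the agents in `Nb j`;  `Nb j` contains the class `j` itself
and is a union of classes. -/
structure Network (n k : ℕ) where
  cls : Fin n → Fin k
  Nb : Fin k → Finset (Fin n)
  cls_surj : Function.Surjective cls
  mem_Nb : ∀ i, i ∈ Nb (cls i)
  Nb_union : ∀ (j : Fin k) (i i' : Fin n), cls i = cls i' → i ∈ Nb j → i' ∈ Nb j

namespace Network

variable {n k : ℕ}

/-- the class `𝓒_j` as a finset of agents -/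
def classSet (net : Network n k) (j : Fin k) : Finset (Fin n) :=
  Finset.univ.filter fun i => net.cls i = j

/-- `κ j = |𝓒_j|` -/
def κ (net : Network n k) (j : Fin k) : ℕ := (net.classSet j).card

end Network

/-- `f` is a utility mechanism for the network: `f_j 0 = f_j (|𝓝_j|+1) = 0` -/
def IsMech {n k : ℕ} (net : Network n k) (f : Fin k → ℕ → ℝ) : Prop :=
  ∀ j, f j 0 = 0 ∧ f j ((net.Nb j).card + 1) = 0

namespace RAGame

variable {n k : ℕ}

/-- the utility `U_i(a) = ∑_{r ∈ a i} v r * f_{cls i} (|a|_r^{𝓝_{cls i}})` -/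
def util (G : RAGame n) (net : Network n k) (f : Fin k → ℕ → ℝ)
    (a : Fin n → Finset (Fin G.m)) (i : Fin n) : ℝ :=
  ∑ r ∈ a i, G.v r * f (net.cls i) (G.cnt a (net.Nb (net.cls i)) r)

/-- `a` is a pure Nash equilibrium -/
def IsNash (G : RAGame n) (net : Network n k) (f : Fin k → ℕ → ℝ)
    (a : Fin n → Finset (Fin G.m)) : Prop :=
  G.IsProfile a ∧ ∀ (i : Fin n), ∀ b ∈ G.act i,
    G.util net f (Function.update a i b) i ≤ G.util net f a i

end RAGame

/-- the defining condition of the class `𝓖`: some profile has positive welfare -/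
def GoodGame {n : ℕ} (G : RAGame n) (w : ℕ → ℝ) : Prop :=
  ∃ a, G.IsProfile a ∧ 0 < G.welf w a

/-- (worst pure-equilibrium welfare) / (best welfare) of a single game -/
def gameRatio {n k : ℕ} (G : RAGame n) (w : ℕ → ℝ) (net : Network n k)
    (f : Fin k → ℕ → ℝ) : ℝ :=
  sInf {x | ∃ a, G.IsNash net f a ∧ x = G.welf w a} /
    sSup {x | ∃ a, G.IsProfile a ∧ x = G.welf w a}

/-- the price of anarchy `PoA(f, w, 𝓒, 𝓝)` -/
def PoA (n : ℕ) {k : ℕ} (w : ℕ → ℝ) (net : Network n k) (f : Fin k → ℕ → ℝ) : ℝ :=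
  sInf {q | ∃ G : RAGame n, GoodGame G w ∧ (∃ a, G.IsNash net f a) ∧
    q = gameRatio G w net f}

/-- index tuples `t = ((a_j, x_j, b_j))_{j ∈ [k]}` (components of size at most `n`) -/
abbrev Idx (n k : ℕ) := Fin k → Fin (n + 1) × Fin (n + 1) × Fin (n + 1)

section IdxDefs

variable {n k : ℕ}

def aI (t : Idx n k) (j : Fin k) : ℕ := ((t j).1 : ℕ)
def xI (t : Idx n k) (j : Fin k) : ℕ := ((t j).2.1 : ℕ)
def bI (t : Idx n k) (j : Fin k) : ℕ := ((t j).2.2 : ℕ)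

/-- `A_t = ∑_j (a_j + x_j)` -/
def AtI (t : Idx n k) : ℕ := ∑ j, (aI t j + xI t j)

/-- `B_t = ∑_j (b_j + x_j)` -/
def BtI (t : Idx n k) : ℕ := ∑ j, (bI t j + xI t j)

/-- `A_{t,j} = ∑_{l : 𝓒_l ⊆ 𝓝_j} (a_l + x_l)` -/
def Atj (net : Network n k) (t : Idx n k) (j : Fin k) : ℕ :=
  ∑ l ∈ Finset.univ.filter (fun l => net.classSet l ⊆ net.Nb j), (aI t l + xI t l)

end IdxDefs

/-- the index set `𝓘` -/
def Iset (n k : ℕ) (κ : Fin k → ℕ) : Finset (Idx n k) :=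
  Finset.univ.filter fun t =>
    (∀ j, aI t j + xI t j + bI t j ≤ κ j) ∧
    1 ≤ ∑ j, (aI t j + xI t j + bI t j) ∧
    ∑ j, (aI t j + xI t j + bI t j) ≤ n

/-- the reduced index set `𝓘_R` -/
def IRset (n k : ℕ) (κ : Fin k → ℕ) : Finset (Idx n k) :=
  (Iset n k κ).filter fun t =>
    ∀ j, aI t j * xI t j * bI t j = 0 ∨ aI t j + xI t j + bI t j = κ j

section LP

variable {n k : ℕ}

/-- the primal LP objective `∑_{t ∈ 𝓘} w(B_t) θ(t)` for `θ : 𝓘 → ℝ` -/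
def primalObj (n k : ℕ) (κ : Fin k → ℕ) (w : ℕ → ℝ)
    (θ : {t : Idx n k // t ∈ Iset n k κ} → ℝ) : ℝ :=
  ∑ t ∈ (Iset n k κ).attach, w (BtI t.1) * θ t

/-- feasibility for the primal LP -/
def PrimalFeasible (n k : ℕ) (net : Network n k) (w : ℕ → ℝ) (f : Fin k → ℕ → ℝ)
    (θ : {t : Idx n k // t ∈ Iset n k net.κ} → ℝ) : Prop :=
  (∀ t, 0 ≤ θ t) ∧
  (∀ j : Fin k, 0 ≤ ∑ t ∈ (Iset n k net.κ).attach,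
      ((aI t.1 j : ℝ) * f j (Atj net t.1 j) - (bI t.1 j : ℝ) * f j (Atj net t.1 j + 1)) * θ t) ∧
  ∑ t ∈ (Iset n k net.κ).attach, w (AtI t.1) * θ t = 1

/-- the set of primal objective values at feasible points; `W* = sSup` of this set -/
def PrimalVals (n k : ℕ) (net : Network n k) (w : ℕ → ℝ) (f : Fin k → ℕ → ℝ) : Set ℝ :=
  {x | ∃ θ, PrimalFeasible n k net w f θ ∧ x = primalObj n k net.κ w θ}

/-- the dual LP constraint associated to index `t` -/
def DualConstr (net : Network n k) (w : ℕ → ℝ) (f : Fin k → ℕ → ℝ)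
    (lam : Fin k → ℝ) (μ : ℝ) (t : Idx n k) : Prop :=
  w (BtI t) +
      ∑ j, lam j * ((aI t j : ℝ) * f j (Atj net t j) - (bI t j : ℝ) * f j (Atj net t j + 1))
    ≤ μ * w (AtI t)

/-- the set of dual-feasible values `μ`; `V* = sInf` of this set -/
def DualSet (n k : ℕ) (net : Network n k) (w : ℕ → ℝ) (f : Fin k → ℕ → ℝ) : Set ℝ :=
  {μ | ∃ lam : Fin k → ℝ, (∀ j, 0 ≤ lam j) ∧ ∀ t ∈ IRset n k net.κ, DualConstr net w f lam μ t}

/-- feasibility for the LP deriving the optimal mechanism (`λ` folded into `f`) -/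
def DesignFeas (n k : ℕ) (net : Network n k) (w : ℕ → ℝ) (f : Fin k → ℕ → ℝ) (μ : ℝ) : Prop :=
  IsMech net f ∧ ∀ t ∈ IRset n k net.κ,
    w (BtI t) + ∑ j, ((aI t j : ℝ) * f j (Atj net t j) - (bI t j : ℝ) * f j (Atj net t j + 1))
      ≤ μ * w (AtI t)

end LP

section Theta

variable {n k : ℕ}

/-- `𝓡(t)`: the resources whose selection signature at `(a^ne, a^opt)` is `t` -/
def Rt (G : RAGame n) (net : Network n k) (ane aopt : Fin n → Finset (Fin G.m))
    (t : Idx n k) : Finset (Fin G.m) :=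
  Finset.univ.filter fun r =>
    ∀ j : Fin k,
      G.cnt ane (net.classSet j) r = aI t j + xI t j ∧
      G.cnt aopt (net.classSet j) r = bI t j + xI t j ∧
      ((net.classSet j).filter fun i => r ∈ ane i ∧ r ∈ aopt i).card = xI t j

/-- `θ(t) = ∑_{r ∈ 𝓡(t)} v r` -/
def θof (G : RAGame n) (net : Network n k) (ane aopt : Fin n → Finset (Fin G.m))
    (t : Idx n k) : ℝ :=
  ∑ r ∈ Rt G net ane aopt t, G.v r

end Theta

section Blind

variable {n : ℕ}

/-- utility in the blind network: blind agents (members of `B`) observe only themselves -/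
def blindUtil (G : RAGame n) (B : Finset (Fin n)) (fbl : ℝ) (fnbl : ℕ → ℝ)
    (a : Fin n → Finset (Fin G.m)) (i : Fin n) : ℝ :=
  if i ∈ B then ∑ r ∈ a i, G.v r * fbl
  else ∑ r ∈ a i, G.v r * fnbl (G.cnt a Finset.univ r)

/-- pure Nash equilibrium in the blind network -/
def IsBlindNash (G : RAGame n) (B : Finset (Fin n)) (fbl : ℝ) (fnbl : ℕ → ℝ)
    (a : Fin n → Finset (Fin G.m)) : Prop :=
  G.IsProfile a ∧ ∀ (i : Fin n), ∀ b ∈ G.act i,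
    blindUtil G B fbl fnbl (Function.update a i b) i ≤ blindUtil G B fbl fnbl a i

/-- the price of anarchy for the blind network with blind agents `B` -/
def blindPoA (n : ℕ) (w : ℕ → ℝ) (B : Finset (Fin n)) (fbl : ℝ) (fnbl : ℕ → ℝ) : ℝ :=
  sInf {q | ∃ G : RAGame n, GoodGame G w ∧ (∃ a, IsBlindNash G B fbl fnbl a) ∧
    q = sInf {x | ∃ a, IsBlindNash G B fbl fnbl a ∧ x = G.welf w a} /
        sSup {x | ∃ a, G.IsProfile a ∧ x = G.welf w a}}

/-- a triple `(a, x, b)` with entries of size at most `n` -/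
abbrev Trip (n : ℕ) := Fin (n + 1) × Fin (n + 1) × Fin (n + 1)

def ta1 (t : Trip n × Trip n) : ℕ := (t.1.1 : ℕ)
def tx1 (t : Trip n × Trip n) : ℕ := (t.1.2.1 : ℕ)
def tb1 (t : Trip n × Trip n) : ℕ := (t.1.2.2 : ℕ)
def ta2 (t : Trip n × Trip n) : ℕ := (t.2.1 : ℕ)
def tx2 (t : Trip n × Trip n) : ℕ := (t.2.2.1 : ℕ)
def tb2 (t : Trip n × Trip n) : ℕ := (t.2.2.2 : ℕ)

/-- `A_t` for the two-class (blind) network; also equals `A_{t,2}` -/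
def At2 (t : Trip n × Trip n) : ℕ := ta1 t + tx1 t + ta2 t + tx2 t

/-- `B_t` for the two-class (blind) network -/
def Bt2 (t : Trip n × Trip n) : ℕ := tb1 t + tx1 t + tb2 t + tx2 t

end Blind

/-- the index set `𝓘` for the two-class (blind) network with `κ` blind agents -/
def I2 (n κ : ℕ) : Finset (Trip n × Trip n) :=
  Finset.univ.filter fun t =>
    ta1 t + tx1 t + tb1 t ≤ κ ∧ ta2 t + tx2 t + tb2 t ≤ n - κ ∧
    1 ≤ ta1 t + tx1 t + tb1 t + (ta2 t + tx2 t + tb2 t) ∧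
    ta1 t + tx1 t + tb1 t + (ta2 t + tx2 t + tb2 t) ≤ n

/-- the reduced index set `𝓘_R` for the two-class (blind) network -/
def IR2 (n κ : ℕ) : Finset (Trip n × Trip n) :=
  (I2 n κ).filter fun t =>
    (ta1 t * tx1 t * tb1 t = 0 ∨ ta1 t + tx1 t + tb1 t = κ) ∧
    (ta2 t * tx2 t * tb2 t = 0 ∨ ta2 t + tx2 t + tb2 t = n - κ)

section BlindLP

variable {n : ℕ}

/-- the dual LP constraint for the blind network at index `t` -/
def BlindDualConstr (w : ℕ → ℝ) (fnbl : ℕ → ℝ) (l1 l2 μ : ℝ) (t : Trip n × Trip n) : Prop :=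
  w (Bt2 t) + l1 * ((ta1 t : ℝ) - (tb1 t : ℝ)) +
      l2 * ((ta2 t : ℝ) * fnbl (At2 t) - (tb2 t : ℝ) * fnbl (At2 t + 1))
    ≤ μ * w (At2 t)

/-- the set of dual-feasible values `μ` for the blind network; `V* = sInf` of this set -/
def BlindDualSet (n κ : ℕ) (w : ℕ → ℝ) (fnbl : ℕ → ℝ) : Set ℝ :=
  {μ | ∃ l1 l2 : ℝ, 0 ≤ l1 ∧ 0 ≤ l2 ∧ ∀ t ∈ IR2 n κ, BlindDualConstr w fnbl l1 l2 μ t}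

/-- feasibility for the optimal-design LP of the blind network -/
def BlindDesignFeas (n κ : ℕ) (w : ℕ → ℝ) (fnbl : ℕ → ℝ) (μ : ℝ) : Prop :=
  fnbl 0 = 0 ∧ fnbl (n + 1) = 0 ∧ ∃ l : ℝ, 0 ≤ l ∧ ∀ t ∈ IR2 n κ,
    w (Bt2 t) + l * ((ta1 t : ℝ) - (tb1 t : ℝ)) + (ta2 t : ℝ) * fnbl (At2 t)
      - (tb2 t : ℝ) * fnbl (At2 t + 1) ≤ μ * w (At2 t)

/-- `𝓡(t)` for the two-class blind network with blind agents `B` -/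
def Rt2 (G : RAGame n) (B : Finset (Fin n)) (ane aopt : Fin n → Finset (Fin G.m))
    (t : Trip n × Trip n) : Finset (Fin G.m) :=
  Finset.univ.filter fun r =>
    G.cnt ane B r = ta1 t + tx1 t ∧ G.cnt aopt B r = tb1 t + tx1 t ∧
    (B.filter fun i => r ∈ ane i ∧ r ∈ aopt i).card = tx1 t ∧
    G.cnt ane Bᶜ r = ta2 t + tx2 t ∧ G.cnt aopt Bᶜ r = tb2 t + tx2 t ∧
    (Bᶜ.filter fun i => r ∈ ane i ∧ r ∈ aopt i).card = tx2 t

/-- `θ(t)` for the two-class blind network -/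
def θof2 (G : RAGame n) (B : Finset (Fin n)) (ane aopt : Fin n → Finset (Fin G.m))
    (t : Trip n × Trip n) : ℝ :=
  ∑ r ∈ Rt2 G B ane aopt t, G.v r

end BlindLP

/-- the potential function `G_j(a) = ∑_r v_r ∑_{l=1}^{|a|_r^{𝓝_j}} f_j(l)` -/
def potentialG {n k : ℕ} (G : RAGame n) (net : Network n k) (f : Fin k → ℕ → ℝ)
    (j : Fin k) (a : Fin n → Finset (Fin G.m)) : ℝ :=
  ∑ r, G.v r * ∑ l ∈ Finset.Icc 1 (G.cnt a (net.Nb j) r), f j l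

/-- the potential `G_1(a) = ∑_r v_r |a|_r^{bl}` for the class of blind agents `B` -/
def blindPotential {n : ℕ} (G : RAGame n) (B : Finset (Fin n))
    (a : Fin n → Finset (Fin G.m)) : ℝ :=
  ∑ r, G.v r * (G.cnt a B r : ℝ)

/-- the game with every resource value scaled by `c ≥ 0` -/
def RAGame.scale {n : ℕ} (G : RAGame n) (c : ℝ) (hc : 0 ≤ c) : RAGame n :=
  ⟨G.m, fun r => c * G.v r, fun r => mul_nonneg hc (G.v_nonneg r), G.act, G.act_nonempty⟩

/-- the game with the same resources but the action set of each agent `i`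
restricted to `{a i, b i}` -/
def RAGame.restrictTwo {n : ℕ} (G : RAGame n) (a b : Fin n → Finset (Fin G.m)) : RAGame n :=
  ⟨G.m, G.v, G.v_nonneg, fun i => {a i, b i}, fun i => ⟨a i, by simp⟩⟩

end

/-!
Group the resources by their signature: the tuple `t` recording, for every class, how many of
its agents select the resource only at `a^ne`, at both profiles, or only at `a^opt`. Then any
sum `∑_t g(t) θ(t)` becomes `∑_r v_r g(sig r)`. For `g = w(A_t)` and `g = w(B_t)` this is
`W(a^ne) = 1` and `W(a^opt)`. For the `j`-th constraint it is
`∑_{i ∈ 𝓒_j} (U_i(a^ne) - U_i(a^opt_i, a^ne_{-i}))`, since a unilateral deviation of `i` changes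
the count `|a|_r^{𝓝_j}` only on resources that `i` newly selects, and there by one;
this sum is nonnegative at a Nash equilibrium.
-/

lemma Finset.card_filter_and_not_add_card_filter_and {α : Type*} (s : Finset α)
    (p q : α → Prop) [DecidablePred p] [DecidablePred q] :
    #(s.filter fun i => p i ∧ ¬q i) + #(s.filter fun i => p i ∧ q i) = #(s.filter p) := by
  simp only [card_filter, ← sum_add_distrib]
  refine sum_congr rfl fun i _ => ?_
  by_cases p i <;> by_cases q i <;> simp [*]

lemma Finset.card_filter_and_not_add_card_filter_and_add_card_filter_not_and {α : Type*}
    (s : Finset α) (p q : α → Prop) [DecidablePred p] [DecidablePred q] :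
    #(s.filter fun i => p i ∧ ¬q i) + #(s.filter fun i => p i ∧ q i)
      + #(s.filter fun i => ¬p i ∧ q i) = #(s.filter fun i => p i ∨ q i) := by
  simp only [card_filter, ← sum_add_distrib]
  refine sum_congr rfl fun i _ => ?_
  by_cases p i <;> by_cases q i <;> simp [*]

namespace Network

variable {n k : ℕ} (net : Network n k)

lemma sum_card_filter_classSet {S : Finset (Fin n)}
    (hS : ∀ i i', net.cls i = net.cls i' → i ∈ S → i' ∈ S) (p : Fin n → Prop)
    [DecidablePred p] :
    ∑ l ∈ univ.filter (fun l => net.classSet l ⊆ S), #((net.classSet l).filter p)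
      = #(S.filter p) := by
  rw [card_eq_sum_card_fiberwise (f := net.cls)
    (t := univ.filter fun l => net.classSet l ⊆ S) fun i hi => ?_]
  · refine sum_congr rfl fun l hl => congrArg card ?_
    replace hl := (mem_filter.1 hl).2
    ext i
    simp only [classSet, mem_filter, mem_univ, true_and]
    exact ⟨fun ⟨h, hp⟩ => ⟨⟨hl (by simp [classSet, h]), hp⟩, h⟩,
      fun ⟨⟨_, hp⟩, h⟩ => ⟨h, hp⟩⟩
  · refine mem_filter.2 ⟨mem_univ _, fun i' hi' => ?_⟩
    exact hS i i' (mem_filter.1 hi').2.symm (mem_filter.1 hi).1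

lemma sum_card_filter_classSet_univ (p : Fin n → Prop) [DecidablePred p] :
    ∑ l, #((net.classSet l).filter p) = #(univ.filter p) := by
  simpa using net.sum_card_filter_classSet (S := univ) (by simp) p

lemma card_filter_classSet_lt (j : Fin k) (p : Fin n → Prop) [DecidablePred p] :
    #((net.classSet j).filter p) < n + 1 :=
  Nat.lt_succ_of_le <| (card_filter_le _ _).trans <| (card_le_univ _).trans_eq (card_fin n)

end Network

namespace RAGame

variable {n k : ℕ} (G : RAGame n) (net : Network n k) (ane aopt : Fin n → Finset (Fin G.m))

/-- In class `j`, the numbers of agents selecting `r` only at `ane`, at both profiles, and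
only at `aopt`: the paper's `(a_j, x_j, b_j)`, so that `r ∈ 𝓡(t)` iff `t` is this tuple. -/
def signature (r : Fin G.m) : Idx n k := fun j =>
  (⟨_, net.card_filter_classSet_lt j fun i => r ∈ ane i ∧ r ∉ aopt i⟩,
    ⟨_, net.card_filter_classSet_lt j fun i => r ∈ ane i ∧ r ∈ aopt i⟩,
    ⟨_, net.card_filter_classSet_lt j fun i => r ∉ ane i ∧ r ∈ aopt i⟩)

lemma aI_add_xI_signature (r : Fin G.m) (j : Fin k) :
    aI (G.signature net ane aopt r) j + xI (G.signature net ane aopt r) j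
      = G.cnt ane (net.classSet j) r :=
  card_filter_and_not_add_card_filter_and (net.classSet j) (fun i => r ∈ ane i)
    (fun i => r ∈ aopt i)

lemma bI_add_xI_signature (r : Fin G.m) (j : Fin k) :
    bI (G.signature net ane aopt r) j + xI (G.signature net ane aopt r) j
      = G.cnt aopt (net.classSet j) r := by
  have h := card_filter_and_not_add_card_filter_and
    (net.classSet j) (fun i => r ∈ aopt i) (fun i => r ∈ ane i)
  simp only [and_comm] at h
  exact h

lemma aI_add_xI_add_bI_signature (r : Fin G.m) (j : Fin k) :
    aI (G.signature net ane aopt r) j + xI (G.signature net ane aopt r) j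
        + bI (G.signature net ane aopt r) j
      = #((net.classSet j).filter fun i => r ∈ ane i ∨ r ∈ aopt i) :=
  card_filter_and_not_add_card_filter_and_add_card_filter_not_and (net.classSet j)
    (fun i => r ∈ ane i) (fun i => r ∈ aopt i)

lemma mem_Rt_iff (t : Idx n k) (r : Fin G.m) :
    r ∈ Rt G net ane aopt t ↔ G.signature net ane aopt r = t := by
  simp only [Rt, mem_filter, mem_univ, true_and]
  constructor
  · intro h
    funext j
    obtain ⟨ha, hb, hx⟩ := h j
    have ha' := G.aI_add_xI_signature net ane aopt r j
    have hb' := G.bI_add_xI_signature net ane aopt r j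
    change xI (G.signature net ane aopt r) j = xI t j at hx
    simp only [aI, xI, bI] at ha hb hx ha' hb'
    ext <;> omega
  · rintro rfl j
    exact ⟨(G.aI_add_xI_signature net ane aopt r j).symm,
      (G.bI_add_xI_signature net ane aopt r j).symm, rfl⟩

lemma signature_mem_Iset_or_eq_zero (r : Fin G.m) :
    G.signature net ane aopt r ∈ Iset n k net.κ ∨ G.signature net ane aopt r = 0 := by
  set s := G.signature net ane aopt r
  by_cases h : ∑ j, (aI s j + xI s j + bI s j) = 0
  · right
    funext j
    have := (sum_eq_zero_iff.1 h) j (mem_univ j)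
    simp only [aI, xI, bI] at this
    ext <;> simp only [Pi.zero_apply, Prod.fst_zero, Prod.snd_zero, Fin.val_zero] <;> omega
  · left
    simp only [Iset, mem_filter, mem_univ, true_and, aI_add_xI_add_bI_signature, s] at h ⊢
    refine ⟨fun j => card_filter_le _ _, by omega, ?_⟩
    rw [net.sum_card_filter_classSet_univ]
    exact (card_filter_le _ _).trans_eq (card_fin n)

lemma Atj_signature (r : Fin G.m) (j : Fin k) :
    Atj net (G.signature net ane aopt r) j = G.cnt ane (net.Nb j) r := by
  simp only [Atj, aI_add_xI_signature, cnt]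
  exact net.sum_card_filter_classSet (net.Nb_union j) _

lemma AtI_signature (r : Fin G.m) :
    AtI (G.signature net ane aopt r) = G.cnt ane univ r := by
  simp only [AtI, aI_add_xI_signature, cnt]
  exact net.sum_card_filter_classSet_univ _

lemma BtI_signature (r : Fin G.m) :
    BtI (G.signature net ane aopt r) = G.cnt aopt univ r := by
  simp only [BtI, bI_add_xI_signature, cnt]
  exact net.sum_card_filter_classSet_univ _

/-- A resource selected at neither profile has signature `0 ∉ 𝓘`; `hg` makes it harmless. -/
lemma sum_mul_θof (g : Idx n k → ℝ) (hg : g 0 = 0) :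
    ∑ t ∈ (Iset n k net.κ).attach, g t.1 * θof G net ane aopt t.1
      = ∑ r, G.v r * g (G.signature net ane aopt r) := by
  have hRt : ∀ t, Rt G net ane aopt t = univ.filter fun r => G.signature net ane aopt r = t :=
    fun t => by ext r; simp [mem_Rt_iff]
  rw [sum_attach (Iset n k net.κ) fun t => g t * θof G net ane aopt t]
  calc ∑ t ∈ Iset n k net.κ, g t * θof G net ane aopt t
      = ∑ t ∈ Iset n k net.κ, ∑ r ∈ univ with G.signature net ane aopt r = t,
          G.v r * g (G.signature net ane aopt r) := by
        refine sum_congr rfl fun t _ => ?_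
        rw [θof, hRt, mul_sum]
        refine sum_congr rfl fun r hr => ?_
        rw [(mem_filter.1 hr).2, mul_comm]
    _ = ∑ r ∈ univ with G.signature net ane aopt r ∈ Iset n k net.κ,
          G.v r * g (G.signature net ane aopt r) := sum_fiberwise_eq_sum_filter _ _ _ _
    _ = _ := sum_filter_of_ne fun r _ hr =>
        (G.signature_mem_Iset_or_eq_zero net ane aopt r).resolve_right fun h0 =>
          hr (by rw [h0, hg, mul_zero])

end RAGame

namespace RAGame

variable {n k : ℕ} {G : RAGame n} {net : Network n k} {f : Fin k → ℕ → ℝ}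

lemma cnt_update_of_mem (a : Fin n → Finset (Fin G.m)) {i : Fin n} {S : Finset (Fin n)}
    (hi : i ∈ S) (b : Finset (Fin G.m)) {r : Fin G.m} (hr : r ∈ b) :
    G.cnt (Function.update a i b) S r = G.cnt a S r + if r ∈ a i then 0 else 1 := by
  have hS : S.filter (fun i' => r ∈ Function.update a i b i')
      = insert i (S.filter fun i' => r ∈ a i') := by
    ext i'
    by_cases h : i' = i
    · subst h; simp [hi, hr]
    · simp [h]
  rw [cnt, cnt, hS, card_insert_eq_ite]
  by_cases h : r ∈ a i <;> simp [h, hi]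

lemma util_sub_util_update (a : Fin n → Finset (Fin G.m)) (i : Fin n)
    (b : Finset (Fin G.m)) :
    G.util net f a i - G.util net f (Function.update a i b) i
      = ∑ r, G.v r *
          ((if r ∈ a i ∧ r ∉ b then f (net.cls i) (G.cnt a (net.Nb (net.cls i)) r) else 0)
            - if r ∉ a i ∧ r ∈ b then f (net.cls i) (G.cnt a (net.Nb (net.cls i)) r + 1)
              else 0) := by
  have hdev : G.util net f (Function.update a i b) i
      = ∑ r ∈ b, G.v r * f (net.cls i)
          (G.cnt a (net.Nb (net.cls i)) r + if r ∈ a i then 0 else 1) := by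
    rw [util, Function.update_self]
    exact sum_congr rfl fun r hr => by rw [cnt_update_of_mem a (net.mem_Nb i) b hr]
  have huniv : ∀ (s : Finset (Fin G.m)) (F : Fin G.m → ℝ),
      ∑ r ∈ s, F r = ∑ r, if r ∈ s then F r else 0 := fun s F => by
    rw [sum_ite_mem, univ_inter]
  rw [hdev, util, huniv (a i), huniv b, ← sum_sub_distrib]
  refine sum_congr rfl fun r _ => ?_
  by_cases ha : r ∈ a i <;> by_cases hb : r ∈ b <;> simp [ha, hb]

lemma sum_classSet_util_sub_util_update (ane aopt : Fin n → Finset (Fin G.m)) (j : Fin k) :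
    ∑ i ∈ net.classSet j,
        (G.util net f ane i - G.util net f (Function.update ane i (aopt i)) i)
      = ∑ r, G.v r * ((aI (G.signature net ane aopt r) j : ℝ) * f j (G.cnt ane (net.Nb j) r)
          - (bI (G.signature net ane aopt r) j : ℝ) * f j (G.cnt ane (net.Nb j) r + 1)) := by
  set N := fun r => G.cnt ane (net.Nb j) r
  calc _ = ∑ i ∈ net.classSet j, ∑ r, G.v r *
          ((if r ∈ ane i ∧ r ∉ aopt i then f j (N r) else 0)
            - if r ∉ ane i ∧ r ∈ aopt i then f j (N r + 1) else 0) :=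
        sum_congr rfl fun i hi => by
          rw [util_sub_util_update, (mem_filter.1 hi).2]
    _ = ∑ r, G.v r *
          (∑ i ∈ net.classSet j, (if r ∈ ane i ∧ r ∉ aopt i then f j (N r) else 0)
            - ∑ i ∈ net.classSet j, if r ∉ ane i ∧ r ∈ aopt i then f j (N r + 1) else 0) := by
        rw [sum_comm]
        simp only [sum_sub_distrib, mul_sub, mul_sum]
    _ = _ := by
        simp only [← sum_filter, sum_const, nsmul_eq_mul]
        rfl

lemma IsNash.sum_signature_nonneg {ane aopt : Fin n → Finset (Fin G.m)}
    (hane : G.IsNash net f ane) (haopt : G.IsProfile aopt) (j : Fin k) :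
    0 ≤ ∑ r, G.v r * ((aI (G.signature net ane aopt r) j : ℝ) * f j (G.cnt ane (net.Nb j) r)
          - (bI (G.signature net ane aopt r) j : ℝ) * f j (G.cnt ane (net.Nb j) r + 1)) := by
  rw [← sum_classSet_util_sub_util_update]
  exact sum_nonneg fun i _ => sub_nonneg.2 (hane.2 i (aopt i) (haopt i))

end RAGame

theorem theta_primal_feasible_general {n k : ℕ} (w : ℕ → ℝ) (hw : IsBasis n w) (net : Network n k)
    (f : Fin k → ℕ → ℝ) (G : RAGame n)
    (ane aopt : Fin n → Finset (Fin G.m))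
    (hane : G.IsNash net f ane) (hone : G.welf w ane = 1) (haopt : G.IsProfile aopt) :
    PrimalFeasible n k net w f (fun t => θof G net ane aopt t.1) ∧
    primalObj n k net.κ w (fun t => θof G net ane aopt t.1) = G.welf w aopt := by
  refine ⟨⟨fun t => sum_nonneg fun r _ => G.v_nonneg r, fun j => ?_, ?_⟩, ?_⟩
  · rw [RAGame.sum_mul_θof G net ane aopt (fun t => (aI t j : ℝ) * f j (Atj net t j)
      - (bI t j : ℝ) * f j (Atj net t j + 1)) (by simp [aI, bI])]
    simpa only [RAGame.Atj_signature] using hane.sum_signature_nonneg haopt j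
  · rw [RAGame.sum_mul_θof G net ane aopt (fun t => w (AtI t)) (by simp [AtI, aI, xI, hw.1])]
    simpa only [RAGame.AtI_signature, RAGame.welf] using hone
  · rw [primalObj, RAGame.sum_mul_θof G net ane aopt (fun t => w (BtI t))
      (by simp [BtI, bI, xI, hw.1])]
    simp only [RAGame.BtI_signature, RAGame.welf]

/-- `θ` built from a pure Nash equilibrium with `W(a^ne) = 1` and any profile
`a^opt` is feasible for the primal LP, with objective value `W(a^opt)`. -/
theorem theta_primal_feasible {n k : ℕ} (w : ℕ → ℝ) (hw : IsBasis n w) (net : Network n k)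
    (f : Fin k → ℕ → ℝ) (hf : IsMech net f) (G : RAGame n)
    (ane aopt : Fin n → Finset (Fin G.m))
    (hane : G.IsNash net f ane) (hone : G.welf w ane = 1) (haopt : G.IsProfile aopt) :
    PrimalFeasible n k net w f (fun t => θof G net ane aopt t.1) ∧
    primalObj n k net.κ w (fun t => θof G net ane aopt t.1) = G.welf w aopt :=
  theta_primal_feasible_general w hw net f G ane aopt hane hone haopt
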